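/- Let x, y ∈ ℝ and τ ∈ ℍ. Then δ_{x,y+1}(τ) = −e^{2πix} δ_{x,y}(τ) + (2e^{2πix}/√(−iτ)) e^{πi(y+1/2)²/τ}. -/

import Mathlib

open Complex Real

noncomputable section

/-- `e(z) = e^{2πiz}`. -/
def ee (z : ℂ) : ℂ := Complex.exp (2 * Real.pi * Complex.I * z)

/-- Jacobi theta: `ϑ(z;τ) = ∑_{v∈ℤ+1/2} e^{πiv²τ + 2πiv(z+1/2)}`. -/
def jTheta (z τ : ℂ) : ℂ :=
  ∑' n : ℤ, Complex.exp (Real.pi * Complex.I * ((n : ℂ) + 1/2)^2 * τ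
      + 2 * Real.pi * Complex.I * ((n : ℂ) + 1/2) * (z + 1/2))

/-- Zwegers' μ-function. -/
def zMu (u v τ : ℂ) : ℂ :=
  Complex.exp (Real.pi * Complex.I * u) / jTheta v τ *
    ∑' n : ℤ, (-1 : ℂ)^n * Complex.exp (2 * Real.pi * Complex.I * (n : ℂ) * v)
      * Complex.exp (Real.pi * Complex.I * (n : ℂ) * ((n : ℂ) + 1) * τ)
      / (1 - Complex.exp (2 * Real.pi * Complex.I * u)
            * Complex.exp (2 * Real.pi * Complex.I * (n : ℂ) * τ))

/-- Zwegers' nonholomorphic `R` function. -/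
def zR (u τ : ℂ) : ℂ :=
  ∑' n : ℤ,
    (((Real.sign ((n : ℝ) + 1/2)
        - 2 * ∫ t in (0:ℝ)..((((n : ℝ) + 1/2) + u.im / τ.im) * Real.sqrt (2 * τ.im)),
            Real.exp (-Real.pi * t^2)) : ℝ) : ℂ)
      * (-1 : ℂ)^n
      * Complex.exp (Real.pi * Complex.I * ((n : ℂ) + 1/2)^2 * τ
          - 2 * Real.pi * Complex.I * ((n : ℂ) + 1/2) * u)

/-- Completed `μ̂`. -/
def zMuHat (u v τ : ℂ) : ℂ := zMu u v τ + zR (u - v) τ / 2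

/-- `V_α(τ) = i^{a+1} q^{-(2A-C)²/(8C²)} μ(2α, τ/2; τ)` with `2α = (A/C)τ + a/2`. -/
def Valpha (A : ℤ) (C : ℕ) (a : ℤ) (τ : ℂ) : ℂ :=
  Complex.I^(a+1) * ee (-(((2*A - (C:ℤ) : ℤ) : ℂ)^2 / (8 * (C:ℂ)^2)) * τ)
    * zMu ((A : ℂ)/(C : ℂ) * τ + (a : ℂ)/2) (τ/2) τ

/-- Completed `V̂_α`. -/
def ValphaHat (A : ℤ) (C : ℕ) (a : ℤ) (τ : ℂ) : ℂ :=
  Complex.I^(a+1) * ee (-(((2*A - (C:ℤ) : ℤ) : ℂ)^2 / (8 * (C:ℂ)^2)) * τ)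
    * zMuHat ((A : ℂ)/(C : ℂ) * τ + (a : ℂ)/2) (τ/2) τ

/-- Mordell integral. -/
def mordellH (u τ : ℂ) : ℂ :=
  ∫ x : ℝ, Complex.exp (Real.pi * Complex.I * τ * (x:ℂ)^2 - 2 * Real.pi * u * (x:ℂ))
    / Complex.cosh (Real.pi * (x:ℂ))

/-- Zwegers' weight 3/2 theta functions `g_{a,b}`. -/
def gab (a b : ℝ) (τ : ℂ) : ℂ :=
  ∑' n : ℤ, ((a : ℂ) + (n : ℂ))
    * Complex.exp (Real.pi * Complex.I * ((a:ℂ) + (n:ℂ))^2 * τ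
        + 2 * Real.pi * Complex.I * ((a:ℂ) + (n:ℂ)) * (b:ℂ))

/-- Integral along the vertical ray from `c` to `i∞`. -/
def rayIntegral (c : ℂ) (f : ℂ → ℂ) : ℂ :=
  ∫ t in Set.Ioi (0:ℝ), Complex.I * f (c + (t : ℂ) * Complex.I)

/-- The function `δ_{x,y}(τ)`. -/
def deltaXY (x y : ℝ) (τ : ℂ) : ℂ :=
  rayIntegral 0 (fun z => gab (x + 1/2) (y + 1/2) z / (-Complex.I * (z + τ)) ^ (1/2 : ℂ))
    + ee ((x:ℂ) * ((y:ℂ) + 1/2)) * ee (-((x:ℂ)^2/2) * τ) * mordellH ((x:ℂ)*τ - (y:ℂ)) τ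

/-- The eta multiplier `ψ(γ)` for `γ = (a b; c d)`. -/
def etaPsi (a b c d : ℤ) : ℂ :=
  if Odd c then
    ((jacobiSym d c.natAbs : ℤ) : ℂ)
      * Complex.exp (Real.pi * Complex.I / 12 * (((a+d)*c - b*d*(c^2-1) - 3*c : ℤ) : ℂ))
  else
    (((if d < 0 ∧ c < 0 then -1 else 1) * jacobiSym c d.natAbs : ℤ) : ℂ)
      * Complex.exp (Real.pi * Complex.I / 12
          * (((a+d)*c - b*d*(c^2-1) + 3*d - 3 - 3*c*d : ℤ) : ℂ))

end

/-! Shifting `y` by one multiplies the theta function `g_{x+1/2, y+1/2}` by `e(x + 1/2) = -e(x)`,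
so the ray integral is multiplied by `-e(x)`. For the Mordell integral, the integrands of
`h(u)` and `h(u+1)` add up to `2 e^{πiτx² - 2π(u+1/2)x}` because
`e^{-2πux} + e^{-2π(u+1)x} = 2 cosh(πx) e^{-2π(u+1/2)x}`; so `h(u) + h(u+1)` is a Gaussian
integral, `2 e^{πi(u+1/2)²/τ} / √(-iτ)`. -/

open MeasureTheory

lemma gab_add_one_right (a b : ℝ) (z : ℂ) :
    gab a (b + 1) z = cexp (2 * π * I * a) * gab a b z := by
  unfold gab
  rw [← tsum_mul_left]
  refine tsum_congr fun n => ?_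
  have hexp : π * I * ((a : ℂ) + n) ^ 2 * z + 2 * π * I * ((a : ℂ) + n) * ((b + 1 : ℝ) : ℂ)
      = (π * I * ((a : ℂ) + n) ^ 2 * z + 2 * π * I * ((a : ℂ) + n) * b)
        + (2 * π * I * a + n * (2 * π * I)) := by
    push_cast; ring
  simp only [hexp, Complex.exp_add, Complex.exp_int_mul_two_pi_mul_I]
  ring

lemma rayIntegral_const_mul (c k : ℂ) (f : ℂ → ℂ) :
    rayIntegral c (fun z => k * f z) = k * rayIntegral c f := by
  unfold rayIntegral
  rw [← integral_const_mul]
  congr 1 with t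
  ring

lemma cosh_pi_mul_ofReal_ne_zero (x : ℝ) : Complex.cosh (π * x) ≠ 0 := by
  rw [← ofReal_mul, ← ofReal_cosh]
  exact ofReal_ne_zero.mpr (Real.cosh_pos _).ne'

section

variable {τ : ℂ} (hτ : 0 < τ.im)
include hτ

lemma re_pi_mul_I_mul_neg : (π * I * τ).re < 0 := by
  simp only [mul_re, mul_im, ofReal_re, ofReal_im, I_re, I_im]
  nlinarith [Real.pi_pos]

lemma integral_cexp_pi_mul_I_mul_sq_sub (w : ℂ) :
    ∫ x : ℝ, cexp (π * I * τ * x ^ 2 - 2 * π * w * x)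
      = cexp (π * I * w ^ 2 / τ) / (-I * τ) ^ (1 / 2 : ℂ) := by
  have hτ0 : τ ≠ 0 := fun h => by simp [h] at hτ
  have hπ : (π : ℂ) ≠ 0 := ofReal_ne_zero.mpr Real.pi_ne_zero
  have hgauss := integral_cexp_quadratic (re_pi_mul_I_mul_neg hτ) (-(2 * π) * w) 0
  have harg : (-I * τ).arg ≠ π := by
    rw [Ne, arg_eq_pi_iff]
    simp [hτ.le]
  have hbase : (π : ℂ) / -(π * I * τ) = (-I * τ)⁻¹ := by
    field_simp
  have hexponent : (0 : ℂ) - (-(2 * π) * w) ^ 2 / (4 * (π * I * τ)) = π * I * w ^ 2 / τ := by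
    rw [zero_sub, ← neg_div, div_eq_div_iff (by simp [hπ, hτ0]) hτ0]
    linear_combination (-4 * (π : ℂ) ^ 2 * w ^ 2 * τ) * I_sq
  rw [hbase, inv_cpow _ _ harg, hexponent, inv_mul_eq_div] at hgauss
  simpa only [add_zero, neg_mul, ← sub_eq_add_neg] using hgauss

lemma integrable_mordellH_integrand (u : ℂ) :
    Integrable fun x : ℝ => cexp (π * I * τ * x ^ 2 - 2 * π * u * x) / Complex.cosh (π * x) := by
  have hcont : Continuous fun x : ℝ => Complex.cosh (π * x) := by fun_prop
  refine (integrable_cexp_quadratic' (re_pi_mul_I_mul_neg hτ) (-(2 * π) * u) 0).mono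
    ((by fun_prop : Continuous _).div hcont cosh_pi_mul_ofReal_ne_zero).aestronglyMeasurable
    (ae_of_all _ fun x => ?_)
  have hcosh : (1 : ℝ) ≤ ‖Complex.cosh (π * x)‖ := by
    rw [← ofReal_mul, ← ofReal_cosh, norm_real, Real.norm_of_nonneg (Real.cosh_pos _).le]
    exact Real.one_le_cosh _
  rw [norm_div]
  refine (div_le_self (norm_nonneg _) hcosh).trans_eq ?_
  congr 2
  ring

end

lemma mordell_integrand_add_add_one (u τ : ℂ) (x : ℝ) :
    cexp (π * I * τ * x ^ 2 - 2 * π * u * x) / Complex.cosh (π * x)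
      + cexp (π * I * τ * x ^ 2 - 2 * π * (u + 1) * x) / Complex.cosh (π * x)
      = 2 * cexp (π * I * τ * x ^ 2 - 2 * π * (u + 1 / 2) * x) := by
  set E := cexp (π * I * τ * x ^ 2 - 2 * π * u * x)
  set Q := cexp (-(π * x))
  have hQ : cexp (π * x) * Q = 1 := by rw [← Complex.exp_add, add_neg_cancel, Complex.exp_zero]
  have hhalf : cexp (π * I * τ * x ^ 2 - 2 * π * (u + 1 / 2) * x) = E * Q := by
    rw [← Complex.exp_add]
    congr 1
    ring
  have hone : cexp (π * I * τ * x ^ 2 - 2 * π * (u + 1) * x) = E * Q * Q := by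
    rw [← Complex.exp_add, ← Complex.exp_add]
    congr 1
    ring
  rw [hhalf, hone, ← add_div, div_eq_iff (cosh_pi_mul_ofReal_ne_zero x), Complex.cosh]
  linear_combination (-E) * hQ

lemma mordellH_add_mordellH_add_one (u τ : ℂ) (hτ : 0 < τ.im) :
    mordellH u τ + mordellH (u + 1) τ
      = 2 * cexp (π * I * (u + 1 / 2) ^ 2 / τ) / (-I * τ) ^ (1 / 2 : ℂ) := by
  unfold mordellH
  rw [← integral_add (integrable_mordellH_integrand hτ u) (integrable_mordellH_integrand hτ _)]
  simp only [mordell_integrand_add_add_one]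
  rw [integral_const_mul, integral_cexp_pi_mul_I_mul_sq_sub hτ]
  exact (mul_div_assoc _ _ _).symm

lemma ee_mul_ee_mul_cexp_pi_mul_I_sq_div (x y : ℝ) {τ : ℂ} (hτ : τ ≠ 0) :
    ee (x * (y + 1 / 2)) * ee (-(x ^ 2 / 2) * τ) * cexp (π * I * (x * τ - (y + 1 / 2)) ^ 2 / τ)
      = cexp (π * I * (y + 1 / 2) ^ 2 / τ) := by
  unfold ee
  rw [← Complex.exp_add, ← Complex.exp_add]
  congr 1
  field_simp
  ring

/-- shift of `δ_{x,y}` in `y`. -/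
theorem stmt13 (x y : ℝ) (τ : ℂ) (hτ : 0 < τ.im) :
    deltaXY x (y + 1) τ
      = -Complex.exp (2 * Real.pi * Complex.I * (x:ℂ)) * deltaXY x y τ
        + (2 * Complex.exp (2 * Real.pi * Complex.I * (x:ℂ))
            / (-Complex.I * τ) ^ (1/2 : ℂ))
          * Complex.exp (Real.pi * Complex.I * ((y:ℂ) + 1/2)^2 / τ) := by
  have hτ0 : τ ≠ 0 := fun h => by simp [h] at hτ
  set E := cexp (2 * π * I * x)
  have htheta : (fun z => gab (x + 1 / 2) (y + 1 + 1 / 2) z / (-I * (z + τ)) ^ (1 / 2 : ℂ))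
      = fun z => -E * (gab (x + 1 / 2) (y + 1 / 2) z / (-I * (z + τ)) ^ (1 / 2 : ℂ)) := by
    ext z
    rw [add_right_comm, gab_add_one_right, ofReal_add, mul_add, Complex.exp_add,
      show 2 * π * I * ((1 / 2 : ℝ) : ℂ) = π * I by push_cast; ring, Complex.exp_pi_mul_I]
    ring
  have hee : ee (x * ((y + 1 : ℝ) + 1 / 2)) = E * ee (x * (y + 1 / 2)) := by
    rw [ee, ee, ← Complex.exp_add]
    congr 1
    push_cast
    ring
  have hmordell := mordellH_add_mordellH_add_one (x * τ - (y + 1 : ℝ)) τ hτ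
  rw [show x * τ - ((y + 1 : ℝ) : ℂ) + 1 = x * τ - y by push_cast; ring,
    show x * τ - ((y + 1 : ℝ) : ℂ) + 1 / 2 = x * τ - (y + 1 / 2) by push_cast; ring] at hmordell
  unfold deltaXY
  rw [htheta, rayIntegral_const_mul, hee]
  linear_combination (E * ee (x * (y + 1 / 2)) * ee (-(x ^ 2 / 2) * τ)) * hmordell
    + (2 * E / (-I * τ) ^ (1 / 2 : ℂ)) * ee_mul_ee_mul_cexp_pi_mul_I_sq_div x y hτ0
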